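/- arXiv:1912.00564 — 2 statements merged into one kernel-verified Lean document; each statement's English description precedes it below -/
import Mathlib

section
/- Let X and Y be nonempty compact ultrametric spaces. Then u_GH(X,Y) = max( inf over maps φ : X → Y of dis_∞(φ), inf over maps ψ : Y → X of dis_∞(ψ) ), where dis_∞(φ) := sup_{x,x'∈X} Λ_∞(u_X(x,x'), u_Y(φ(x),φ(x'))) and dis_∞(ψ) := sup_{y,y'∈Y} Λ_∞(u_Y(y,y'), u_X(ψ(y),ψ(y'))). In other words, the modified Gromov–Hausdorff ultrametric obtained by dropping the codistortion term coincides with u_GH. -/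
noncomputable section

/-- A correspondence between `X` and `Y`. -/
def IsCorrespondence {X Y : Type*} (R : Set (X × Y)) : Prop :=
  (∀ x : X, ∃ y : Y, (x, y) ∈ R) ∧ ∀ y : Y, ∃ x : X, (x, y) ∈ R

/-- `Λ_∞(a,b) := max(a,b)` if `a ≠ b`, and `0` if `a = b`. -/
def lambdaInf (a b : ℝ) : ℝ := if a = b then 0 else max a b

/-- The `∞`-distortion of a correspondence between two metric spaces. -/
def infDistortion {X Y : Type*} [MetricSpace X] [MetricSpace Y]
    (R : Set (X × Y)) : ℝ :=
  sSup {r : ℝ | ∃ a ∈ R, ∃ b ∈ R, r = lambdaInf (dist a.1 b.1) (dist a.2 b.2)}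

/-- The Gromov–Hausdorff ultrametric `u_GH(X,Y) := inf_R dis_∞(R)`. -/
def uGH (X Y : Type) [MetricSpace X] [MetricSpace Y] : ℝ :=
  sInf {r : ℝ | ∃ R : Set (X × Y), IsCorrespondence R ∧ r = infDistortion R}

/-- The `∞`-distortion of a map between metric spaces. -/
def mapDisInf {X Y : Type*} [MetricSpace X] [MetricSpace Y] (φ : X → Y) : ℝ :=
  ⨆ x : X, ⨆ x' : X, lambdaInf (dist x x') (dist (φ x) (φ x'))

lemma lambdaInf_self (a : ℝ) : lambdaInf a a = 0 := by simp [lambdaInf]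

lemma lambdaInf_le_iff {a b t : ℝ} (ht : 0 ≤ t) :
    lambdaInf a b ≤ t ↔ a = b ∨ (a ≤ t ∧ b ≤ t) := by
  unfold lambdaInf
  split
  · next h => simp [h, ht]
  · next h => simp [h, max_le_iff]

lemma lambdaInf_nonneg {a b : ℝ} (ha : 0 ≤ a) : 0 ≤ lambdaInf a b := by
  unfold lambdaInf
  split
  · exact le_refl 0
  · exact le_max_of_le_left ha

lemma lambdaInf_le_max {a b : ℝ} (ha : 0 ≤ a) (hb : 0 ≤ b) :
    lambdaInf a b ≤ max a b := by
  unfold lambdaInf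
  split
  · exact le_max_of_le_left ha
  · exact le_refl _

/-- Surjectivity on the quotient: if `φ` and `ψ` both have `∞`-distortion `≤ t`,
then every point of `Y` is within `t` of the image of `φ`. -/
lemma key_surj {X Y : Type} [MetricSpace X] [CompactSpace X] [Nonempty X]
    [MetricSpace Y] [CompactSpace Y] [Nonempty Y]
    (hY : ∀ x y z : Y, dist x z ≤ max (dist x y) (dist y z))
    {t : ℝ} (ht : 0 < t) (φ : X → Y) (ψ : Y → X)
    (hφ : ∀ x x', lambdaInf (dist x x') (dist (φ x) (φ x')) ≤ t)
    (hψ : ∀ y y', lambdaInf (dist y y') (dist (ψ y) (ψ y')) ≤ t) :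
    ∀ y : Y, ∃ x : X, dist (φ x) y ≤ t := by
  -- facts about g = φ ∘ ψ
  have hψ1 : ∀ y y', dist y y' ≤ t → dist (ψ y) (ψ y') ≤ t := by
    intro y y' h
    rcases (lambdaInf_le_iff ht.le).1 (hψ y y') with he | ⟨_, h2⟩
    · exact he ▸ h
    · exact h2
  have hψ2 : ∀ y y', t < dist y y' → dist (ψ y) (ψ y') = dist y y' := by
    intro y y' h
    rcases (lambdaInf_le_iff ht.le).1 (hψ y y') with he | ⟨h1, _⟩
    · exact he.symm
    · exact absurd h1 (not_le.2 h)
  have hφ1 : ∀ x x', dist x x' ≤ t → dist (φ x) (φ x') ≤ t := by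
    intro x x' h
    rcases (lambdaInf_le_iff ht.le).1 (hφ x x') with he | ⟨_, h2⟩
    · exact he ▸ h
    · exact h2
  have hφ2 : ∀ x x', t < dist x x' → dist (φ x) (φ x') = dist x x' := by
    intro x x' h
    rcases (lambdaInf_le_iff ht.le).1 (hφ x x') with he | ⟨h1, _⟩
    · exact he.symm
    · exact absurd h1 (not_le.2 h)
  set g : Y → Y := fun y => φ (ψ y) with hg
  have hg1 : ∀ y y', dist y y' ≤ t → dist (g y) (g y') ≤ t :=
    fun y y' h => hφ1 _ _ (hψ1 _ _ h)
  have hg2 : ∀ y y', t < dist y y' → dist (g y) (g y') = dist y y' := by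
    intro y y' h
    rw [hg]
    rw [hφ2 _ _ (by rw [hψ2 _ _ h]; exact h), hψ2 _ _ h]
  -- the quotient by the relation `dist ≤ t`
  let s : Setoid Y :=
    ⟨fun y y' => dist y y' ≤ t,
     ⟨fun y => by simp [dist_self, ht.le],
      fun {a b} h => by rwa [dist_comm],
      fun {a b c} hab hbc => le_trans (hY a b c) (max_le hab hbc)⟩⟩
  -- the quotient is finite
  haveI hfin : Finite (Quotient s) := by
    obtain ⟨F, hF⟩ := isCompact_univ.elim_finite_subcover
      (fun y : Y => Metric.ball y t) (fun y => Metric.isOpen_ball)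
      (fun y _ => Set.mem_iUnion.2 ⟨y, Metric.mem_ball_self ht⟩)
    have hsurj : Function.Surjective (fun z : F => Quotient.mk s z.1) := by
      intro q
      obtain ⟨y, rfl⟩ := Quotient.exists_rep q
      have hy : y ∈ ⋃ i ∈ F, Metric.ball i t := hF (Set.mem_univ y)
      obtain ⟨i, hi, hyi⟩ := Set.mem_iUnion₂.1 hy
      refine ⟨⟨i, hi⟩, Quotient.sound ?_⟩
      show dist i y ≤ t
      rw [dist_comm]
      exact le_of_lt hyi
    exact Finite.of_surjective _ hsurj
  -- g induces an injective, hence surjective, self-map of the quotient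
  have hwd : ∀ y y', s.r y y' → s.r (g y) (g y') := fun y y' h => hg1 y y' h
  set G : Quotient s → Quotient s := Quotient.map g hwd with hG
  have hGinj : Function.Injective G := by
    intro q q'
    induction q using Quotient.ind with | _ y =>
    induction q' using Quotient.ind with | _ y' =>
    intro h
    have h2 : dist (g y) (g y') ≤ t := Quotient.exact h
    refine Quotient.sound ?_
    show dist y y' ≤ t
    by_contra hc
    push_neg at hc
    rw [hg2 _ _ hc] at h2
    exact absurd h2 (not_le.2 hc)
  have hGsurj : Function.Surjective G := Finite.surjective_of_injective hGinj
  intro y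
  obtain ⟨q, hq⟩ := hGsurj (Quotient.mk s y)
  obtain ⟨y'', rfl⟩ := Quotient.exists_rep q
  refine ⟨ψ y'', ?_⟩
  have : s.r (g y'') y := Quotient.exact hq
  exact this

/-- The modified Gromov–Hausdorff ultrametric (dropping the codistortion term)
coincides with `u_GH` on nonempty compact ultrametric spaces. -/
theorem uGH_eq_modified (X Y : Type)
    [MetricSpace X] [CompactSpace X] [Nonempty X]
    [MetricSpace Y] [CompactSpace Y] [Nonempty Y]
    (hX : ∀ x y z : X, dist x z ≤ max (dist x y) (dist y z))
    (hY : ∀ x y z : Y, dist x z ≤ max (dist x y) (dist y z)) :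
    uGH X Y = max (⨅ φ : X → Y, mapDisInf φ) (⨅ ψ : Y → X, mapDisInf ψ) := by
  set D : ℝ := max (Metric.diam (Set.univ : Set X)) (Metric.diam (Set.univ : Set Y)) with hD
  have hDbd : ∀ (x x' : X) (y y' : Y), lambdaInf (dist x x') (dist y y') ≤ D := by
    intro x x' y y'
    refine le_trans (lambdaInf_le_max dist_nonneg dist_nonneg) (max_le_max ?_ ?_)
    · exact Metric.dist_le_diam_of_mem isCompact_univ.isBounded trivial trivial
    · exact Metric.dist_le_diam_of_mem isCompact_univ.isBounded trivial trivial
  have hDbd' : ∀ (y y' : Y) (x x' : X), lambdaInf (dist y y') (dist x x') ≤ D := by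
    intro y y' x x'
    refine le_trans (lambdaInf_le_max dist_nonneg dist_nonneg) ?_
    rw [max_comm]
    refine max_le_max ?_ ?_
    · exact Metric.dist_le_diam_of_mem isCompact_univ.isBounded trivial trivial
    · exact Metric.dist_le_diam_of_mem isCompact_univ.isBounded trivial trivial
  -- basic facts about mapDisInf
  have le_mapDis : ∀ (φ : X → Y) (x x' : X),
      lambdaInf (dist x x') (dist (φ x) (φ x')) ≤ mapDisInf φ := by
    intro φ x x'
    have h1 : lambdaInf (dist x x') (dist (φ x) (φ x')) ≤
        ⨆ b : X, lambdaInf (dist x b) (dist (φ x) (φ b)) :=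
      le_ciSup (f := fun b : X => lambdaInf (dist x b) (dist (φ x) (φ b)))
        ⟨D, by rintro r ⟨b, rfl⟩; exact hDbd x b _ _⟩ x'
    refine le_ciSup_of_le ⟨D, ?_⟩ x h1
    rintro r ⟨a, rfl⟩
    exact ciSup_le fun b => hDbd a b _ _
  have le_mapDis' : ∀ (ψ : Y → X) (y y' : Y),
      lambdaInf (dist y y') (dist (ψ y) (ψ y')) ≤ mapDisInf ψ := by
    intro ψ y y'
    have h1 : lambdaInf (dist y y') (dist (ψ y) (ψ y')) ≤
        ⨆ b : Y, lambdaInf (dist y b) (dist (ψ y) (ψ b)) :=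
      le_ciSup (f := fun b : Y => lambdaInf (dist y b) (dist (ψ y) (ψ b)))
        ⟨D, by rintro r ⟨b, rfl⟩; exact hDbd' y b _ _⟩ y'
    refine le_ciSup_of_le ⟨D, ?_⟩ y h1
    rintro r ⟨a, rfl⟩
    exact ciSup_le fun b => hDbd' a b _ _
  have mapDis_nonneg : ∀ φ : X → Y, 0 ≤ mapDisInf φ := by
    intro φ
    have := le_mapDis φ (Classical.arbitrary X) (Classical.arbitrary X)
    rwa [dist_self, dist_self, lambdaInf_self] at this
  have mapDis_nonneg' : ∀ ψ : Y → X, 0 ≤ mapDisInf ψ := by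
    intro ψ
    have := le_mapDis' ψ (Classical.arbitrary Y) (Classical.arbitrary Y)
    rwa [dist_self, dist_self, lambdaInf_self] at this
  -- facts about infDistortion
  have distSet_bdd : ∀ R : Set (X × Y),
      BddAbove {r : ℝ | ∃ a ∈ R, ∃ b ∈ R, r = lambdaInf (dist a.1 b.1) (dist a.2 b.2)} := by
    intro R
    refine ⟨D, ?_⟩
    rintro r ⟨a, _, b, _, rfl⟩
    exact hDbd _ _ _ _
  have infDist_nonneg : ∀ R : Set (X × Y), IsCorrespondence R → 0 ≤ infDistortion R := by
    intro R hR
    obtain ⟨y0, hy0⟩ := hR.1 (Classical.arbitrary X)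
    have h0 : (0 : ℝ) ∈ {r : ℝ | ∃ a ∈ R, ∃ b ∈ R,
        r = lambdaInf (dist a.1 b.1) (dist a.2 b.2)} :=
      ⟨_, hy0, _, hy0, by simp [dist_self, lambdaInf_self]⟩
    exact le_csSup (distSet_bdd R) h0
  -- the set defining uGH is nonempty and bounded below
  have hScorr : IsCorrespondence (Set.univ : Set (X × Y)) :=
    ⟨fun x => ⟨Classical.arbitrary Y, trivial⟩, fun y => ⟨Classical.arbitrary X, trivial⟩⟩
  have hSne : {r : ℝ | ∃ R : Set (X × Y), IsCorrespondence R ∧ r = infDistortion R}.Nonempty :=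
    ⟨_, Set.univ, hScorr, rfl⟩
  have hSbdd : BddBelow {r : ℝ | ∃ R : Set (X × Y), IsCorrespondence R ∧ r = infDistortion R} := by
    refine ⟨0, ?_⟩
    rintro r ⟨R, hR, rfl⟩
    exact infDist_nonneg R hR
  refine le_antisymm ?_ ?_
  · -- uGH ≤ max : construct a correspondence from nearly optimal maps
    refine le_of_forall_pos_le_add ?_
    intro ε hε
    set M : ℝ := max (⨅ φ : X → Y, mapDisInf φ) (⨅ ψ : Y → X, mapDisInf ψ) with hM
    have hM0 : 0 ≤ M := le_max_of_le_left (le_ciInf mapDis_nonneg)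
    set t : ℝ := M + ε with htdef
    have ht : 0 < t := by positivity
    have hMt : M < t := lt_add_of_pos_right M hε
    obtain ⟨φ, hφlt⟩ : ∃ φ : X → Y, mapDisInf φ < t :=
      exists_lt_of_ciInf_lt (lt_of_le_of_lt
        (le_max_left (⨅ φ : X → Y, mapDisInf φ) (⨅ ψ : Y → X, mapDisInf ψ)) hMt)
    obtain ⟨ψ, hψlt⟩ : ∃ ψ : Y → X, mapDisInf ψ < t :=
      exists_lt_of_ciInf_lt (lt_of_le_of_lt
        (le_max_right (⨅ φ : X → Y, mapDisInf φ) (⨅ ψ : Y → X, mapDisInf ψ)) hMt)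
    have hφt : ∀ x x', lambdaInf (dist x x') (dist (φ x) (φ x')) ≤ t :=
      fun x x' => le_trans (le_mapDis φ x x') hφlt.le
    have hψt : ∀ y y', lambdaInf (dist y y') (dist (ψ y) (ψ y')) ≤ t :=
      fun y y' => le_trans (le_mapDis' ψ y y') hψlt.le
    have hφ1 : ∀ x x', dist x x' ≤ t → dist (φ x) (φ x') ≤ t := by
      intro x x' h
      rcases (lambdaInf_le_iff ht.le).1 (hφt x x') with he | ⟨_, h2⟩
      · exact he ▸ h
      · exact h2
    have hφ2 : ∀ x x', t < dist x x' → dist (φ x) (φ x') = dist x x' := by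
      intro x x' h
      rcases (lambdaInf_le_iff ht.le).1 (hφt x x') with he | ⟨h1, _⟩
      · exact he.symm
      · exact absurd h1 (not_le.2 h)
    set R : Set (X × Y) := {p | dist (φ p.1) p.2 ≤ t} with hRdef
    have hcorr : IsCorrespondence R := by
      constructor
      · intro x
        exact ⟨φ x, by simp [hRdef, dist_self, ht.le]⟩
      · intro y
        obtain ⟨x, hx⟩ := key_surj hY ht φ ψ hφt hψt y
        exact ⟨x, hx⟩
    have hdis : infDistortion R ≤ t := by
      refine csSup_le ⟨0, ⟨_, hcorr.1 (Classical.arbitrary X) |>.choose_spec, _,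
        hcorr.1 (Classical.arbitrary X) |>.choose_spec, by simp [dist_self, lambdaInf_self]⟩⟩ ?_
      rintro r ⟨⟨x, y⟩, hxy, ⟨x', y'⟩, hxy', rfl⟩
      simp only [hRdef, Set.mem_setOf_eq] at hxy hxy'
      dsimp only
      rw [lambdaInf_le_iff ht.le]
      by_cases hA : dist x x' ≤ t
      · right
        refine ⟨hA, ?_⟩
        calc dist y y' ≤ max (dist y (φ x)) (dist (φ x) y') := hY _ _ _
          _ ≤ t := by
            refine max_le ?_ ?_
            · rw [dist_comm]; exact hxy
            · calc dist (φ x) y' ≤ max (dist (φ x) (φ x')) (dist (φ x') y') := hY _ _ _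
                _ ≤ t := max_le (hφ1 _ _ hA) hxy'
      · left
        push_neg at hA
        have hb : dist (φ x) (φ x') = dist x x' := hφ2 _ _ hA
        have h1 : dist y y' ≤ dist x x' := by
          calc dist y y' ≤ max (dist y (φ x)) (dist (φ x) y') := hY _ _ _
            _ ≤ max t (max (dist (φ x) (φ x')) (dist (φ x') y')) :=
                max_le_max (by rw [dist_comm]; exact hxy) (hY _ _ _)
            _ ≤ max t (max (dist x x') t) :=
                max_le_max le_rfl (max_le_max hb.le hxy')
            _ ≤ dist x x' := max_le hA.le (max_le le_rfl hA.le)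
        have h2 : dist x x' ≤ dist y y' := by
          have hc : dist x x' ≤ max t (max (dist y y') t) := by
            calc dist x x' = dist (φ x) (φ x') := hb.symm
              _ ≤ max (dist (φ x) y) (dist y (φ x')) := hY _ _ _
              _ ≤ max t (max (dist y y') (dist y' (φ x'))) :=
                  max_le_max hxy (hY _ _ _)
              _ ≤ max t (max (dist y y') t) :=
                  max_le_max le_rfl (max_le_max le_rfl (by rw [dist_comm]; exact hxy'))
          rcases le_max_iff.1 hc with h | h
          · exact absurd h (not_le.2 hA)
          · rcases le_max_iff.1 h with h | h
            · exact h
            · exact absurd h (not_le.2 hA)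
        linarith
    calc uGH X Y ≤ infDistortion R := csInf_le hSbdd ⟨R, hcorr, rfl⟩
      _ ≤ t := hdis
  · -- max ≤ uGH : choose maps from a correspondence
    refine le_csInf hSne ?_
    rintro r ⟨R, hR, rfl⟩
    refine max_le ?_ ?_
    · have hsel : ∀ x : X, (x, (hR.1 x).choose) ∈ R := fun x => (hR.1 x).choose_spec
      set φ : X → Y := fun x => (hR.1 x).choose with hφdef
      refine le_trans (ciInf_le ⟨0, ?_⟩ φ) ?_
      · rintro r ⟨f, rfl⟩
        exact mapDis_nonneg f
      · refine ciSup_le fun x => ciSup_le fun x' => ?_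
        exact le_csSup (distSet_bdd R) ⟨(x, φ x), hsel x, (x', φ x'), hsel x', rfl⟩
    · have hsel : ∀ y : Y, ((hR.2 y).choose, y) ∈ R := fun y => (hR.2 y).choose_spec
      set ψ : Y → X := fun y => (hR.2 y).choose with hψdef
      refine le_trans (ciInf_le ⟨0, ?_⟩ ψ) ?_
      · rintro r ⟨f, rfl⟩
        exact mapDis_nonneg' f
      · refine ciSup_le fun y => ciSup_le fun y' => ?_
        refine le_csSup (distSet_bdd R) ⟨(ψ y, y), hsel y, (ψ y', y'), hsel y', ?_⟩
        simp [lambdaInf, eq_comm, max_comm]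
end
end

section
/- Let p ∈ [1,∞) and let X, Y be nonempty compact ultrametric spaces. Define the p-interleaving distance d_{I,p}(X,Y) := inf over pairs of maps φ : X → Y and ψ : Y → X of max( sup_{x,x'∈X} A_p(u_Y(φ(x),φ(x')), u_X(x,x')), sup_{y,y'∈Y} A_p(u_X(ψ(y),ψ(y')), u_Y(y,y')), 2^{−1/p} · max( sup_{x∈X} u_X(x, ψ(φ(x))), sup_{y∈Y} u_Y(y, φ(ψ(y))) ) ). Then 2^{−1/p} · d_{I,p}(X,Y) ≤ d_GH^{(p)}(X,Y) ≤ d_{I,p}(X,Y). -/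
noncomputable section

/-- `Λ_p(a,b) = |a^p - b^p|^(1/p)`. -/
def lambdaP (p a b : ℝ) : ℝ := |a ^ p - b ^ p| ^ (1 / p)

/-- The asymmetric `p`-difference: `A_p(a,b) = (a^p - b^p)^(1/p)` if `a > b`, else `0`. -/
def aP (p a b : ℝ) : ℝ := if b < a then (a ^ p - b ^ p) ^ (1 / p) else 0

/-- The `p`-distortion of a correspondence between two metric spaces. -/
def pDistortion {X Y : Type*} [MetricSpace X] [MetricSpace Y] (p : ℝ)
    (R : Set (X × Y)) : ℝ :=
  sSup {r : ℝ | ∃ a ∈ R, ∃ b ∈ R, r = lambdaP p (dist a.1 b.1) (dist a.2 b.2)}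

/-- The `p`-Gromov–Hausdorff distance `2^(-1/p) · inf_R dis_p(R)`. -/
def dGHp (p : ℝ) (X Y : Type) [MetricSpace X] [MetricSpace Y] : ℝ :=
  (2 : ℝ) ^ (-(1 / p)) *
    sInf {r : ℝ | ∃ R : Set (X × Y), IsCorrespondence R ∧ r = pDistortion p R}

/-- The `p`-interleaving distance between (compact) ultrametric spaces. -/
def dIp (p : ℝ) (X Y : Type) [MetricSpace X] [MetricSpace Y] : ℝ :=
  ⨅ φ : X → Y, ⨅ ψ : Y → X,
    max (max (⨆ x : X, ⨆ x' : X, aP p (dist (φ x) (φ x')) (dist x x'))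
             (⨆ y : Y, ⨆ y' : Y, aP p (dist (ψ y) (ψ y')) (dist y y')))
        ((2 : ℝ) ^ (-(1 / p)) *
          max (⨆ x : X, dist x (ψ (φ x))) (⨆ y : Y, dist y (φ (ψ y))))

section helpers

variable {p a b B : ℝ}

lemma rpow_one_div_rpow (hp : 0 < p) (ha : 0 ≤ a) : (a ^ p) ^ (1 / p) = a := by
  rw [← Real.rpow_mul ha, mul_one_div_cancel hp.ne', Real.rpow_one]

lemma rpow_rpow_one_div (hp : 0 < p) (ha : 0 ≤ a) : (a ^ (1 / p)) ^ p = a := by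
  rw [← Real.rpow_mul ha, one_div_mul_cancel hp.ne', Real.rpow_one]

lemma aP_nonneg (hp : 0 < p) (ha : 0 ≤ a) (hb : 0 ≤ b) : 0 ≤ aP p a b := by
  unfold aP
  split_ifs with h
  · exact Real.rpow_nonneg (sub_nonneg.2 (Real.rpow_le_rpow hb h.le hp.le)) _
  · exact le_refl 0

lemma aP_le_left (hp : 0 < p) (ha : 0 ≤ a) (hb : 0 ≤ b) : aP p a b ≤ a := by
  unfold aP
  split_ifs with h
  · calc (a ^ p - b ^ p) ^ (1 / p) ≤ (a ^ p) ^ (1 / p) := by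
          apply Real.rpow_le_rpow (sub_nonneg.2 (Real.rpow_le_rpow hb h.le hp.le))
            (by have := Real.rpow_nonneg hb p; linarith) (by positivity)
      _ = a := rpow_one_div_rpow hp ha
  · exact ha

lemma aP_bound (hp : 0 < p) (ha : 0 ≤ a) (hb : 0 ≤ b) (hB : 0 ≤ B)
    (h : aP p a b ≤ B) : a ^ p ≤ B ^ p + b ^ p := by
  unfold aP at h
  split_ifs at h with hlt
  · have h0 : 0 ≤ a ^ p - b ^ p := sub_nonneg.2 (Real.rpow_le_rpow hb hlt.le hp.le)
    have := Real.rpow_le_rpow (Real.rpow_nonneg h0 _) h hp.le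
    rw [rpow_rpow_one_div hp h0] at this
    linarith
  · push_neg at hlt
    have := Real.rpow_le_rpow ha hlt hp.le
    have hB' := Real.rpow_nonneg hB p
    linarith

lemma lambdaP_comm : lambdaP p a b = lambdaP p b a := by
  unfold lambdaP; rw [abs_sub_comm]

lemma aP_le_lambdaP (hp : 0 < p) (ha : 0 ≤ a) (hb : 0 ≤ b) :
    aP p a b ≤ lambdaP p b a := by
  unfold aP lambdaP
  rw [abs_sub_comm]
  split_ifs with h
  · rw [abs_of_nonneg (sub_nonneg.2 (Real.rpow_le_rpow hb h.le hp.le))]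
  · exact Real.rpow_nonneg (abs_nonneg _) _

lemma lambdaP_le_max (hp : 0 < p) (ha : 0 ≤ a) (hb : 0 ≤ b) :
    lambdaP p a b ≤ max a b := by
  unfold lambdaP
  have hap := Real.rpow_nonneg ha p
  have hbp := Real.rpow_nonneg hb p
  rcases le_total (a ^ p) (b ^ p) with h | h
  · rw [abs_of_nonpos (by linarith)]
    calc (-(a ^ p - b ^ p)) ^ (1 / p) ≤ (b ^ p) ^ (1 / p) :=
          Real.rpow_le_rpow (by linarith) (by linarith) (by positivity)
      _ = b := rpow_one_div_rpow hp hb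
      _ ≤ max a b := le_max_right _ _
  · rw [abs_of_nonneg (by linarith)]
    calc (a ^ p - b ^ p) ^ (1 / p) ≤ (a ^ p) ^ (1 / p) :=
          Real.rpow_le_rpow (by linarith) (by linarith) (by positivity)
      _ = a := rpow_one_div_rpow hp ha
      _ ≤ max a b := le_max_left _ _

lemma lambdaP_zero_right (hp : 0 < p) (ha : 0 ≤ a) : lambdaP p a 0 = a := by
  unfold lambdaP
  rw [Real.zero_rpow hp.ne', sub_zero, abs_of_nonneg (Real.rpow_nonneg ha p),
    rpow_one_div_rpow hp ha]

lemma chain_bound {p s t u v w Mp : ℝ} (hp : 0 < p) (hs : 0 ≤ s) (ht : 0 ≤ t)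
    (hMp : 0 ≤ Mp) (hu : u ^ p ≤ 2 * Mp) (hv : v ^ p ≤ Mp + t ^ p)
    (hw : w ^ p ≤ 2 * Mp) (h : s ≤ max u (max v w)) :
    s ^ p - t ^ p ≤ 2 * Mp := by
  have ht' : 0 ≤ t ^ p := Real.rpow_nonneg ht p
  rcases le_max_iff.1 h with h' | h'
  · have := Real.rpow_le_rpow hs h' hp.le; linarith
  rcases le_max_iff.1 h' with h'' | h''
  · have := Real.rpow_le_rpow hs h'' hp.le; linarith
  · have := Real.rpow_le_rpow hs h'' hp.le; linarith

lemma le_iSup1 {α : Type} (f : α → ℝ) {K : ℝ} (hK : ∀ i, f i ≤ K) (i : α) :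
    f i ≤ ⨆ j, f j :=
  le_ciSup ⟨K, by rintro _ ⟨j, rfl⟩; exact hK j⟩ i

lemma le_iSup2 {α β : Type} [Nonempty β] (f : α → β → ℝ) {K : ℝ}
    (hK : ∀ i j, f i j ≤ K) (i : α) (j : β) :
    f i j ≤ ⨆ i', ⨆ j', f i' j' :=
  (le_iSup1 (f i) (hK i) j).trans
    (le_iSup1 (fun i' => ⨆ j', f i' j') (fun i' => ciSup_le (hK i')) i)

end helpers

/-- Bi-Lipschitz equivalence of the `p`-interleaving distance with `d_GH^{(p)}` on
nonempty compact ultrametric spaces: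
`2^(-1/p)·d_{I,p}(X,Y) ≤ d_GH^{(p)}(X,Y) ≤ d_{I,p}(X,Y)`. -/
theorem dIp_biLipschitz_dGHp (p : ℝ) (hp : 1 ≤ p)
    (X Y : Type)
    [MetricSpace X] [CompactSpace X] [Nonempty X]
    [MetricSpace Y] [CompactSpace Y] [Nonempty Y]
    (hX : ∀ x y z : X, dist x z ≤ max (dist x y) (dist y z))
    (hY : ∀ x y z : Y, dist x z ≤ max (dist x y) (dist y z)) :
    (2 : ℝ) ^ (-(1 / p)) * dIp p X Y ≤ dGHp p X Y ∧ dGHp p X Y ≤ dIp p X Y := by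
  classical
  have hp0 : 0 < p := lt_of_lt_of_le one_pos hp
  have hq0 : 0 < 1 / p := by positivity
  have hc0 : (0:ℝ) < (2 : ℝ) ^ (-(1 / p)) := Real.rpow_pos_of_pos two_pos _
  have he0 : (0:ℝ) < (2 : ℝ) ^ (1 / p) := Real.rpow_pos_of_pos two_pos _
  have hce : (2 : ℝ) ^ (-(1 / p)) * (2 : ℝ) ^ (1 / p) = 1 := by
    rw [← Real.rpow_add two_pos, neg_add_cancel, Real.rpow_zero]
  have hc1 : (2 : ℝ) ^ (-(1 / p)) ≤ 1 :=
    Real.rpow_le_one_of_one_le_of_nonpos one_le_two (by linarith)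
  have hep : ((2 : ℝ) ^ (1 / p)) ^ p = 2 := by
    rw [← Real.rpow_mul (by norm_num), one_div_mul_cancel hp0.ne', Real.rpow_one]
  have hdX : ∀ x x' : X, dist x x' ≤ Metric.diam (Set.univ : Set X) := fun x x' =>
    Metric.dist_le_diam_of_mem isCompact_univ.isBounded (Set.mem_univ x) (Set.mem_univ x')
  have hdY : ∀ y y' : Y, dist y y' ≤ Metric.diam (Set.univ : Set Y) := fun y y' =>
    Metric.dist_le_diam_of_mem isCompact_univ.isBounded (Set.mem_univ y) (Set.mem_univ y')
  have hpd0 : ∀ R : Set (X × Y), 0 ≤ pDistortion p R := fun R =>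
    Real.sSup_nonneg (by rintro r ⟨a, ha, b, hb, rfl⟩; exact Real.rpow_nonneg (abs_nonneg _) _)
  have hMnn : ∀ (φ' : X → Y) (ψ' : Y → X),
      (0:ℝ) ≤ max (max (⨆ x : X, ⨆ x' : X, aP p (dist (φ' x) (φ' x')) (dist x x'))
             (⨆ y : Y, ⨆ y' : Y, aP p (dist (ψ' y) (ψ' y')) (dist y y')))
        ((2 : ℝ) ^ (-(1 / p)) *
          max (⨆ x : X, dist x (ψ' (φ' x))) (⨆ y : Y, dist y (φ' (ψ' y)))) := fun φ' ψ' =>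
    le_max_of_le_left (le_max_of_le_left (Real.iSup_nonneg fun _ =>
      Real.iSup_nonneg fun _ => aP_nonneg hp0 dist_nonneg dist_nonneg))
  -- Part 1 : dIp ≤ pDistortion of any correspondence
  have key1 : ∀ R : Set (X × Y), IsCorrespondence R → dIp p X Y ≤ pDistortion p R := by
    intro R hR
    choose φ hφ using hR.1
    choose ψ hψ using hR.2
    have hbddS : BddAbove {r : ℝ | ∃ a ∈ R, ∃ b ∈ R,
        r = lambdaP p (dist a.1 b.1) (dist a.2 b.2)} := by
      refine ⟨max (Metric.diam (Set.univ : Set X)) (Metric.diam (Set.univ : Set Y)), ?_⟩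
      rintro _ ⟨a, ha, b, hb, rfl⟩
      exact (lambdaP_le_max hp0 dist_nonneg dist_nonneg).trans
        (max_le_max (hdX _ _) (hdY _ _))
    have hmem : ∀ a ∈ R, ∀ b ∈ R,
        lambdaP p (dist a.1 b.1) (dist a.2 b.2) ≤ pDistortion p R := fun a ha b hb =>
      le_csSup hbddS ⟨a, ha, b, hb, rfl⟩
    have h1 : (⨆ x : X, ⨆ x' : X, aP p (dist (φ x) (φ x')) (dist x x')) ≤ pDistortion p R :=
      ciSup_le fun x => ciSup_le fun x' =>
        (aP_le_lambdaP hp0 dist_nonneg dist_nonneg).trans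
          (hmem (x, φ x) (hφ x) (x', φ x') (hφ x'))
    have h2 : (⨆ y : Y, ⨆ y' : Y, aP p (dist (ψ y) (ψ y')) (dist y y')) ≤ pDistortion p R := by
      refine ciSup_le fun y => ciSup_le fun y' => ?_
      have h := hmem (ψ y, y) (hψ y) (ψ y', y') (hψ y')
      rw [lambdaP_comm] at h
      exact (aP_le_lambdaP hp0 dist_nonneg dist_nonneg).trans h
    have h3 : (⨆ x : X, dist x (ψ (φ x))) ≤ pDistortion p R := by
      refine ciSup_le fun x => ?_
      have h := hmem (x, φ x) (hφ x) (ψ (φ x), φ x) (hψ (φ x))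
      rw [dist_self, lambdaP_zero_right hp0 dist_nonneg] at h
      exact h
    have h4 : (⨆ y : Y, dist y (φ (ψ y))) ≤ pDistortion p R := by
      refine ciSup_le fun y => ?_
      have h := hmem (ψ y, y) (hψ y) (ψ y, φ (ψ y)) (hφ (ψ y))
      rw [dist_self, lambdaP_comm, lambdaP_zero_right hp0 dist_nonneg] at h
      exact h
    have hsup0 : (0:ℝ) ≤ max (⨆ x : X, dist x (ψ (φ x))) (⨆ y : Y, dist y (φ (ψ y))) :=
      le_max_of_le_left (Real.iSup_nonneg fun _ => dist_nonneg)
    have h5 : (2 : ℝ) ^ (-(1 / p)) *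
        max (⨆ x : X, dist x (ψ (φ x))) (⨆ y : Y, dist y (φ (ψ y))) ≤ pDistortion p R :=
      (mul_le_of_le_one_left hsup0 hc1).trans (max_le h3 h4)
    unfold dIp
    refine le_trans (ciInf_le ⟨0, ?_⟩ φ) (le_trans (ciInf_le ⟨0, ?_⟩ ψ) ?_)
    · rintro _ ⟨φ', rfl⟩; exact le_ciInf fun ψ' => hMnn φ' ψ'
    · rintro _ ⟨ψ', rfl⟩; exact hMnn φ ψ'
    · exact max_le (max_le h1 h2) h5
  -- Part 2 : dGHp ≤ interleaving bound for any pair of maps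
  have key2 : ∀ (φ : X → Y) (ψ : Y → X), dGHp p X Y ≤
      max (max (⨆ x : X, ⨆ x' : X, aP p (dist (φ x) (φ x')) (dist x x'))
             (⨆ y : Y, ⨆ y' : Y, aP p (dist (ψ y) (ψ y')) (dist y y')))
        ((2 : ℝ) ^ (-(1 / p)) *
          max (⨆ x : X, dist x (ψ (φ x))) (⨆ y : Y, dist y (φ (ψ y)))) := by
    intro φ ψ
    set M := max (max (⨆ x : X, ⨆ x' : X, aP p (dist (φ x) (φ x')) (dist x x'))
             (⨆ y : Y, ⨆ y' : Y, aP p (dist (ψ y) (ψ y')) (dist y y')))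
        ((2 : ℝ) ^ (-(1 / p)) *
          max (⨆ x : X, dist x (ψ (φ x))) (⨆ y : Y, dist y (φ (ψ y)))) with hM
    have hM0 : 0 ≤ M := hMnn φ ψ
    have hMp : 0 ≤ M ^ p := Real.rpow_nonneg hM0 p
    set R : Set (X × Y) := {pr : X × Y | pr.2 = φ pr.1 ∨ pr.1 = ψ pr.2} with hRdef
    have hcorr : IsCorrespondence R :=
      ⟨fun x => ⟨φ x, Or.inl rfl⟩, fun y => ⟨ψ y, Or.inr rfl⟩⟩
    have hmul : ∀ t : ℝ, (2 : ℝ) ^ (-(1 / p)) * t ≤ M → t ≤ (2 : ℝ) ^ (1 / p) * M := by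
      intro t h
      have h2 := mul_le_mul_of_nonneg_left h he0.le
      rwa [← mul_assoc, mul_comm ((2:ℝ) ^ (1/p)), hce, one_mul] at h2
    have hA : ∀ x x', dist (φ x) (φ x') ^ p ≤ M ^ p + dist x x' ^ p := by
      intro x x'
      refine aP_bound hp0 dist_nonneg dist_nonneg hM0 ?_
      refine (le_iSup2 (fun x x' => aP p (dist (φ x) (φ x')) (dist x x'))
        (fun i j => (aP_le_left hp0 dist_nonneg dist_nonneg).trans (hdY (φ i) (φ j))) x x').trans ?_
      rw [hM]; exact (le_max_left _ _).trans (le_max_left _ _)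
    have hB : ∀ y y', dist (ψ y) (ψ y') ^ p ≤ M ^ p + dist y y' ^ p := by
      intro y y'
      refine aP_bound hp0 dist_nonneg dist_nonneg hM0 ?_
      refine (le_iSup2 (fun y y' => aP p (dist (ψ y) (ψ y')) (dist y y'))
        (fun i j => (aP_le_left hp0 dist_nonneg dist_nonneg).trans (hdX (ψ i) (ψ j))) y y').trans ?_
      rw [hM]; exact (le_max_right _ _).trans (le_max_left _ _)
    have hCD : (2 : ℝ) ^ (-(1 / p)) *
        max (⨆ x : X, dist x (ψ (φ x))) (⨆ y : Y, dist y (φ (ψ y))) ≤ M := by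
      rw [hM]; exact le_max_right _ _
    have hC : ∀ x, dist x (ψ (φ x)) ^ p ≤ 2 * M ^ p := by
      intro x
      have h1 : dist x (ψ (φ x)) ≤ ⨆ x' : X, dist x' (ψ (φ x')) :=
        le_iSup1 (fun x' => dist x' (ψ (φ x'))) (fun x' => hdX _ _) x
      have h2 : dist x (ψ (φ x)) ≤ (2 : ℝ) ^ (1 / p) * M :=
        (h1.trans (le_max_left _ _)).trans (hmul _ hCD)
      have h3 := Real.rpow_le_rpow dist_nonneg h2 hp0.le
      rwa [Real.mul_rpow he0.le hM0, hep] at h3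
    have hD : ∀ y, dist y (φ (ψ y)) ^ p ≤ 2 * M ^ p := by
      intro y
      have h1 : dist y (φ (ψ y)) ≤ ⨆ y' : Y, dist y' (φ (ψ y')) :=
        le_iSup1 (fun y' => dist y' (φ (ψ y'))) (fun y' => hdY _ _) y
      have h2 : dist y (φ (ψ y)) ≤ (2 : ℝ) ^ (1 / p) * M :=
        (h1.trans (le_max_right _ _)).trans (hmul _ hCD)
      have h3 := Real.rpow_le_rpow dist_nonneg h2 hp0.le
      rwa [Real.mul_rpow he0.le hM0, hep] at h3
    have hC' : ∀ x, dist (ψ (φ x)) x ^ p ≤ 2 * M ^ p := fun x => by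
      rw [dist_comm]; exact hC x
    have hD' : ∀ y, dist (φ (ψ y)) y ^ p ≤ 2 * M ^ p := fun y => by
      rw [dist_comm]; exact hD y
    have hφφ : ∀ x x', |dist x x' ^ p - dist (φ x) (φ x') ^ p| ≤ 2 * M ^ p := by
      intro x x'
      rw [abs_sub_le_iff]
      constructor
      · exact chain_bound hp0 dist_nonneg dist_nonneg hMp (hC x) (hB (φ x) (φ x'))
          (hC' x')
          ((hX x (ψ (φ x)) x').trans (max_le_max le_rfl (hX (ψ (φ x)) (ψ (φ x')) x')))
      · have := hA x x'; linarith
    have hψψ : ∀ y y', |dist (ψ y) (ψ y') ^ p - dist y y' ^ p| ≤ 2 * M ^ p := by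
      intro y y'
      rw [abs_sub_le_iff]
      constructor
      · have := hB y y'; linarith
      · exact chain_bound hp0 dist_nonneg dist_nonneg hMp (hD y) (hA (ψ y) (ψ y'))
          (hD' y')
          ((hY y (φ (ψ y)) y').trans (max_le_max le_rfl (hY (φ (ψ y)) (φ (ψ y')) y')))
    have hmix : ∀ x y, |dist x (ψ y) ^ p - dist (φ x) y ^ p| ≤ 2 * M ^ p := by
      intro x y
      rw [abs_sub_le_iff]
      constructor
      · exact chain_bound hp0 dist_nonneg dist_nonneg hMp (hC x) (hB (φ x) y) (hC x)
          ((hX x (ψ (φ x)) (ψ y)).trans (max_le_max le_rfl (le_max_left _ _)))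
      · exact chain_bound hp0 dist_nonneg dist_nonneg hMp
          (hD' y) (hA x (ψ y)) (hD' y)
          ((hY (φ x) (φ (ψ y)) y).trans (le_max_right _ _))
    have hfinal : ∀ s t : ℝ, |s ^ p - t ^ p| ≤ 2 * M ^ p →
        lambdaP p s t ≤ (2 : ℝ) ^ (1 / p) * M := by
      intro s t h
      calc lambdaP p s t = |s ^ p - t ^ p| ^ (1 / p) := rfl
        _ ≤ (2 * M ^ p) ^ (1 / p) := Real.rpow_le_rpow (abs_nonneg _) h (by positivity)
        _ = (2 : ℝ) ^ (1 / p) * M := by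
            rw [Real.mul_rpow (by norm_num) (Real.rpow_nonneg hM0 _),
              rpow_one_div_rpow hp0 hM0]
    have hstep2 : pDistortion p R ≤ (2 : ℝ) ^ (1 / p) * M := by
      unfold pDistortion
      refine csSup_le ⟨lambdaP p (dist (Classical.arbitrary X) (Classical.arbitrary X))
        (dist (φ (Classical.arbitrary X)) (φ (Classical.arbitrary X))),
        (Classical.arbitrary X, φ (Classical.arbitrary X)), Or.inl rfl,
        (Classical.arbitrary X, φ (Classical.arbitrary X)), Or.inl rfl, rfl⟩ ?_
      rintro _ ⟨a, ha, b, hb, rfl⟩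
      obtain ha | ha := ha <;> obtain hb | hb := hb
      · rw [ha, hb]; exact hfinal _ _ (hφφ a.1 b.1)
      · rw [ha, hb]; exact hfinal _ _ (hmix a.1 b.2)
      · rw [ha, hb, dist_comm (ψ a.2) b.1, dist_comm a.2 (φ b.1)]
        exact hfinal _ _ (hmix b.1 a.2)
      · rw [ha, hb]; exact hfinal _ _ (hψψ a.2 b.2)
    have hstep1 : dGHp p X Y ≤ (2 : ℝ) ^ (-(1 / p)) * pDistortion p R := by
      unfold dGHp
      refine mul_le_mul_of_nonneg_left (csInf_le ⟨0, ?_⟩ ⟨R, hcorr, rfl⟩) hc0.le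
      rintro r ⟨R', hR', rfl⟩; exact hpd0 R'
    calc dGHp p X Y ≤ (2 : ℝ) ^ (-(1 / p)) * pDistortion p R := hstep1
      _ ≤ (2 : ℝ) ^ (-(1 / p)) * ((2 : ℝ) ^ (1 / p) * M) :=
          mul_le_mul_of_nonneg_left hstep2 hc0.le
      _ = M := by rw [← mul_assoc, hce, one_mul]
  constructor
  · have h1 : dIp p X Y ≤ sInf {r : ℝ | ∃ R : Set (X × Y),
        IsCorrespondence R ∧ r = pDistortion p R} := by
      refine le_csInf ⟨pDistortion p (Set.univ : Set (X × Y)), Set.univ,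
        ⟨fun x => ⟨Classical.arbitrary Y, trivial⟩, fun y => ⟨Classical.arbitrary X, trivial⟩⟩,
        rfl⟩ ?_
      rintro r ⟨R, hR, rfl⟩
      exact key1 R hR
    unfold dGHp
    exact mul_le_mul_of_nonneg_left h1 hc0.le
  · unfold dIp
    exact le_ciInf fun φ => le_ciInf fun ψ => key2 φ ψ
end
end
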